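/- Let ε₁, ε₂ : (ℤ_3 × ℤ_3) × (ℤ_3 × ℤ_3) → ℂ be symmetric functions that are equivalent, i.e., there exist a function a : ℤ_3 × ℤ_3 → ℂ with a(u) ≠ 0 for all u, and a matrix A ∈ H₃, such that ε₁(u,v) = a(u)·a(v)·a(u+v)⁻¹·ε₂(uA, vA) for all u, v. Let B₁ and B₂ be ℂ-bilinear maps sl(3,ℂ) × sl(3,ℂ) → sl(3,ℂ) satisfying B_t(X_u, X_v) = ε_t(u,v)·⁅X_u, X_v⁆ for all u, v ∈ I and t = 1, 2. Then there exists a ℂ-linear automorphism g of sl(3,ℂ) such that g(B₁(x,y)) = B₂(g(x), g(y)) for all x, y ∈ sl(3,ℂ). (Graded contractions corresponding to equivalent solutions are isomorphic.) -/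

import Mathlib

open Matrix

attribute [local instance 100] LieRing.ofAssociativeRing

/-- ω = exp(2πi/3). -/
noncomputable def om3 : ℂ := Complex.exp (2 * Real.pi * Complex.I / 3)

/-- The diagonal matrix Q = diag(1, ω, ω²). -/
noncomputable def Qm3 : Matrix (Fin 3) (Fin 3) ℂ :=
  Matrix.diagonal fun j => om3 ^ (j : ℕ)

/-- The matrix P with P_{j,k} = 1 if k ≡ j + 1 (mod 3) and 0 otherwise. -/
noncomputable def Pm3 : Matrix (Fin 3) (Fin 3) ℂ :=
  Matrix.of fun j k => if ((k : ℕ) : ZMod 3) = ((j : ℕ) : ZMod 3) + 1 then 1 else 0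

/-- X_{(r,s)} = Q^r P^s for (r,s) ∈ ℤ_3 × ℤ_3. -/
noncomputable def Xm3 (u : ZMod 3 × ZMod 3) : Matrix (Fin 3) (Fin 3) ℂ :=
  Qm3 ^ u.1.val * Pm3 ^ u.2.val

/-- sl(3,ℂ), the Lie algebra of traceless 3×3 complex matrices. -/
noncomputable abbrev sl3 : LieSubalgebra ℂ (Matrix (Fin 3) (Fin 3) ℂ) :=
  LieAlgebra.SpecialLinear.sl (Fin 3) ℂ

/-- The right action of a 2×2 matrix A over ℤ₃ on a row vector v ∈ ℤ₃ × ℤ₃, v ↦ vA. -/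
def actv (A : Matrix (Fin 2) (Fin 2) (ZMod 3)) (v : ZMod 3 × ZMod 3) : ZMod 3 × ZMod 3 :=
  (v.1 * A 0 0 + v.2 * A 1 0, v.1 * A 0 1 + v.2 * A 1 1)

/-! The basis `X_u` of `sl(3, ℂ)` satisfies `X_u X_v = ω^{u₂v₁} X_{u+v}`, hence
`⁅X_u, X_v⁆ = c(u, v) X_{u+v}` with `c(u, v) = ω^{u₂v₁} - ω^{v₂u₁}`. A matrix `A ∈ H₃` multiplies
the symplectic form `u₂v₁ - v₂u₁` by `det A = ±1`, so `(u, v) ↦ (uA)₂(vA)₁ - u₂v₁` differs from a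
symmetric bilinear form by a multiple of the symplectic form; as `2` is invertible mod `3` a
symmetric form is a coboundary. This produces nonzero scalars `ν(u)` with
`ν(u) ν(v) c(uA, vA) = c(u, v) ν(u + v)`, and then `X_u ↦ a(u) ν(u) X_{uA}` is the required
isomorphism. -/

lemma om3_isPrimitiveRoot : IsPrimitiveRoot om3 3 := by
  simpa [om3] using Complex.isPrimitiveRoot_exp 3 (by norm_num)

noncomputable def omChar : AddChar (ZMod 3) ℂ :=
  AddChar.zmodChar 3 om3_isPrimitiveRoot.pow_eq_one

lemma omChar_eq_one_iff {x : ZMod 3} : omChar x = 1 ↔ x = 0 :=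
  (AddChar.zmodChar_primitive_of_primitive_root 3 om3_isPrimitiveRoot).zmod_char_eq_one_iff 3 x

lemma omChar_ne_zero (x : ZMod 3) : omChar x ≠ 0 := (omChar.val_isUnit x).ne_zero

lemma Qm3_pow_three : Qm3 ^ 3 = 1 := by
  rw [Qm3, diagonal_pow, ← diagonal_one]
  congr 1
  funext j
  simp [← pow_mul, pow_mul', om3_isPrimitiveRoot.pow_eq_one]

lemma Pm3_pow_three : Pm3 ^ 3 = 1 := by
  ext j k
  fin_cases j <;> fin_cases k <;>
    simp +decide [Pm3, pow_succ, mul_apply, Fin.sum_univ_three, one_apply]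

lemma Pm3_mul_Qm3 : Pm3 * Qm3 = om3 • (Qm3 * Pm3) := by
  have h := om3_isPrimitiveRoot.pow_eq_one
  ext j k
  fin_cases j <;> fin_cases k <;> simp +decide [Pm3, Qm3, mul_diagonal, diagonal_mul] <;> grind

theorem pow_mul_pow_eq_smul_of_mul_eq_smul {R A : Type*} [CommSemiring R] [Semiring A]
    [Algebra R A] {p q : A} {c : R} (h : p * q = c • (q * p)) (r s : ℕ) :
    p ^ s * q ^ r = c ^ (r * s) • (q ^ r * p ^ s) := by
  have hs : ∀ s : ℕ, p ^ s * q = c ^ s • (q * p ^ s) := by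
    intro s
    induction s with
    | zero => simp
    | succ s ih =>
      rw [pow_succ, mul_assoc, h, mul_smul_comm, ← mul_assoc, ih, smul_mul_assoc, smul_smul,
        mul_assoc, ← pow_succ, ← pow_succ']
  induction r with
  | zero => simp
  | succ r ih =>
    rw [pow_succ, ← mul_assoc, ih, smul_mul_assoc, mul_assoc, hs, mul_smul_comm, smul_smul,
      ← mul_assoc, ← pow_succ, ← pow_add, add_mul, one_mul]

def twist (u v : ZMod 3 × ZMod 3) : ZMod 3 := u.2 * v.1

lemma Xm3_mul (u v : ZMod 3 × ZMod 3) : Xm3 u * Xm3 v = omChar (twist u v) • Xm3 (u + v) := by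
  have hQ : ∀ n, Qm3 ^ n = Qm3 ^ (n % 3) := fun n => pow_eq_pow_mod n Qm3_pow_three
  have hP : ∀ n, Pm3 ^ n = Pm3 ^ (n % 3) := fun n => pow_eq_pow_mod n Pm3_pow_three
  calc Xm3 u * Xm3 v = Qm3 ^ u.1.val * (Pm3 ^ u.2.val * Qm3 ^ v.1.val) * Pm3 ^ v.2.val := by
        simp only [Xm3, mul_assoc]
    _ = om3 ^ (v.1.val * u.2.val) • (Qm3 ^ (u.1.val + v.1.val) * Pm3 ^ (u.2.val + v.2.val)) := by
        rw [pow_mul_pow_eq_smul_of_mul_eq_smul Pm3_mul_Qm3, mul_smul_comm, smul_mul_assoc,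
          pow_add, pow_add, mul_assoc, mul_assoc, mul_assoc]
    _ = omChar (twist u v) • Xm3 (u + v) := by
        rw [Xm3, Prod.fst_add, Prod.snd_add, ZMod.val_add, ZMod.val_add, ← hQ, ← hP, omChar,
          ← AddChar.zmodChar_apply' om3_isPrimitiveRoot.pow_eq_one, Nat.cast_mul,
          ZMod.natCast_zmod_val, ZMod.natCast_zmod_val, twist, mul_comm]

lemma Xm3_zero : Xm3 0 = 1 := by simp [Xm3]

lemma Xm3_mul_comm (u v : ZMod 3 × ZMod 3) :
    Xm3 u * Xm3 v = omChar (twist u v - twist v u) • (Xm3 v * Xm3 u) := by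
  rw [Xm3_mul, Xm3_mul, smul_smul, ← AddChar.map_add_eq_mul, sub_add_cancel, add_comm]

theorem Matrix.trace_eq_zero_of_mul_eq_smul_mul {n K : Type*} [Fintype n] [DecidableEq n]
    [CommRing K] [IsDomain K] {X Y Z : Matrix n n K} {c : K} (hYZ : Y * Z = 1)
    (h : Y * X = c • (X * Y)) (hc : c ≠ 1) : X.trace = 0 := by
  have hconj : (Y * X * Z).trace = X.trace := by
    rw [trace_mul_cycle, mul_eq_one_comm.mp hYZ, one_mul]
  rw [h, smul_mul_assoc, mul_assoc, hYZ, mul_one, trace_smul, smul_eq_mul] at hconj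
  have : (c - 1) * X.trace = 0 := by linear_combination hconj
  exact (mul_eq_zero.mp this).resolve_left (sub_ne_zero.mpr hc)

lemma trace_Xm3 (t : ZMod 3 × ZMod 3) : (Xm3 t).trace = if t = 0 then 3 else 0 := by
  split_ifs with ht
  · simp [ht, Xm3_zero]
  -- conjugating by `Q` or `P` multiplies `X_t` by a nontrivial cube root of unity
  obtain ⟨e, he, hne⟩ : ∃ e, twist e (-e) = 0 ∧ twist e t - twist t e ≠ 0 := by
    revert t; decide
  refine Matrix.trace_eq_zero_of_mul_eq_smul_mul (Z := Xm3 (-e)) ?_ (Xm3_mul_comm e t) ?_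
  · rw [Xm3_mul, he, AddChar.map_zero_eq_one, one_smul, add_neg_cancel, Xm3_zero]
  · exact omChar_eq_one_iff.not.mpr hne

lemma trace_Xm3_neg_mul (w u : ZMod 3 × ZMod 3) :
    (Xm3 (-w) * Xm3 u).trace = if w = u then 3 * omChar (twist (-w) u) else 0 := by
  simp only [Xm3_mul, trace_smul, trace_Xm3, neg_add_eq_zero]
  split_ifs <;> simp [mul_comm]

lemma linearIndependent_Xm3 : LinearIndependent ℂ Xm3 := by
  rw [Fintype.linearIndependent_iff]
  intro c hc w
  have h := congrArg (fun M => (Xm3 (-w) * M).trace) hc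
  simp only [Finset.mul_sum, mul_smul_comm, trace_sum, trace_smul, trace_Xm3_neg_mul,
    smul_eq_mul, mul_ite, mul_zero, Finset.sum_ite_eq, Finset.mem_univ, if_true,
    trace_zero] at h
  simpa [omChar_ne_zero] using h

lemma Xm3_mem_sl3 {t : ZMod 3 × ZMod 3} (ht : t ≠ 0) : Xm3 t ∈ sl3 := by
  simp [LieAlgebra.SpecialLinear.sl, trace_Xm3, ht]

lemma finrank_sl3 : Module.finrank ℂ sl3 = 8 := by
  have hsurj : Function.Surjective (traceLinearMap (Fin 3) ℂ ℂ) := fun c =>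
    ⟨diagonal ![c, 0, 0], by simp [trace_diagonal, Fin.sum_univ_three]⟩
  have h := LinearMap.finrank_range_add_finrank_ker (traceLinearMap (Fin 3) ℂ ℂ)
  rw [LinearMap.range_eq_top.mpr hsurj, finrank_top, Module.finrank_self,
    Module.finrank_matrix] at h
  simp only [Module.finrank_self, Fintype.card_fin] at h
  change Module.finrank ℂ (LinearMap.ker (traceLinearMap (Fin 3) ℂ ℂ)) = 8
  omega

noncomputable def basisSl3 : Module.Basis {t : ZMod 3 × ZMod 3 // t ≠ 0} ℂ sl3 :=
  basisOfLinearIndependentOfCardEqFinrank' (fun t => ⟨Xm3 t, Xm3_mem_sl3 t.2⟩)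
    (LinearIndependent.of_comp sl3.toSubmodule.subtype
      (linearIndependent_Xm3.comp _ Subtype.val_injective))
    (by rw [finrank_sl3]; rfl)

@[simp]
lemma coe_basisSl3 (t : {t : ZMod 3 × ZMod 3 // t ≠ 0}) :
    (basisSl3 t : Matrix (Fin 3) (Fin 3) ℂ) = Xm3 t := by
  simp [basisSl3]

noncomputable def structConst (u v : ZMod 3 × ZMod 3) : ℂ :=
  omChar (twist u v) - omChar (twist v u)

lemma lie_Xm3 (u v : ZMod 3 × ZMod 3) : ⁅Xm3 u, Xm3 v⁆ = structConst u v • Xm3 (u + v) := by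
  rw [Ring.lie_def, Xm3_mul, Xm3_mul, add_comm v u, structConst, sub_smul]

lemma actv_mul (A B : Matrix (Fin 2) (Fin 2) (ZMod 3)) (u : ZMod 3 × ZMod 3) :
    actv (A * B) u = actv B (actv A u) := by
  simp only [actv, mul_apply, Fin.sum_univ_two]
  ext <;> ring

lemma actv_one (u : ZMod 3 × ZMod 3) : actv 1 u = u := by
  simp [actv]

lemma actv_add (A : Matrix (Fin 2) (Fin 2) (ZMod 3)) (u v : ZMod 3 × ZMod 3) :
    actv A (u + v) = actv A u + actv A v := by
  simp only [actv, Prod.fst_add, Prod.snd_add, Prod.mk_add_mk]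
  ext <;> ring

noncomputable def actvEquiv (A : Matrix (Fin 2) (Fin 2) (ZMod 3)) (hA : IsUnit A.det) :
    (ZMod 3 × ZMod 3) ≃+ (ZMod 3 × ZMod 3) where
  toFun := actv A
  invFun := actv A⁻¹
  left_inv u := by rw [← actv_mul, mul_nonsing_inv A hA, actv_one]
  right_inv u := by rw [← actv_mul, nonsing_inv_mul A hA, actv_one]
  map_add' := actv_add A

lemma twist_actv_sub_twist_actv (A : Matrix (Fin 2) (Fin 2) (ZMod 3)) (u v : ZMod 3 × ZMod 3) :
    twist (actv A u) (actv A v) - twist (actv A v) (actv A u) =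
      A.det * (twist u v - twist v u) := by
  simp only [twist, actv, det_fin_two]
  ring

-- `2 = 1 / 2` in `ZMod 3`: a symmetric bilinear form `γ` is the coboundary of
-- `u ↦ γ(u, u) / 2`.
def twistCorrection (A : Matrix (Fin 2) (Fin 2) (ZMod 3)) (u : ZMod 3 × ZMod 3) : ZMod 3 :=
  2 * (twist (actv A u) (actv A u) - twist u u)

lemma twistCorrection_add_sub (A : Matrix (Fin 2) (Fin 2) (ZMod 3)) (u v : ZMod 3 × ZMod 3) :
    twistCorrection A (u + v) - twistCorrection A u - twistCorrection A v =
      2 * (twist (actv A u) (actv A v) + twist (actv A v) (actv A u) - twist u v - twist v u) := by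
  simp only [twistCorrection, twist, actv, Prod.fst_add, Prod.snd_add]
  ring

lemma twist_actv_of_det_eq_one {A : Matrix (Fin 2) (Fin 2) (ZMod 3)}
    (hA : A.det = 1) (u v : ZMod 3 × ZMod 3) :
    twist (actv A u) (actv A v) =
      twist u v + (twistCorrection A (u + v) - twistCorrection A u - twistCorrection A v) := by
  have h3 : (3 : ZMod 3) = 0 := rfl
  have hs := twist_actv_sub_twist_actv A u v
  rw [hA] at hs
  rw [twistCorrection_add_sub]
  linear_combination -hs + (twist v u - twist (actv A v) (actv A u)) * h3

lemma twist_actv_of_det_eq_neg_one {A : Matrix (Fin 2) (Fin 2) (ZMod 3)}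
    (hA : A.det = -1) (u v : ZMod 3 × ZMod 3) :
    twist (actv A u) (actv A v) =
      twist v u + (twistCorrection A (u + v) - twistCorrection A u - twistCorrection A v) := by
  have h3 : (3 : ZMod 3) = 0 := rfl
  have hs := twist_actv_sub_twist_actv A u v
  rw [hA] at hs
  rw [twistCorrection_add_sub]
  linear_combination -hs + (twist u v - twist (actv A v) (actv A u)) * h3

noncomputable def detSign (A : Matrix (Fin 2) (Fin 2) (ZMod 3)) : ℂ :=
  if A.det = 1 then 1 else -1

lemma detSign_mul_self (A : Matrix (Fin 2) (Fin 2) (ZMod 3)) : detSign A * detSign A = 1 := by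
  unfold detSign
  split_ifs <;> norm_num

lemma structConst_actv {A : Matrix (Fin 2) (Fin 2) (ZMod 3)} (hA : A.det = 1 ∨ A.det = -1)
    (u v : ZMod 3 × ZMod 3) :
    structConst (actv A u) (actv A v) = detSign A *
      omChar (twistCorrection A (u + v) - twistCorrection A u - twistCorrection A v) *
        structConst u v := by
  have hswap : twistCorrection A (v + u) - twistCorrection A v - twistCorrection A u =
      twistCorrection A (u + v) - twistCorrection A u - twistCorrection A v := by
    rw [add_comm, sub_right_comm]
  rcases hA with hA | hA
  · rw [structConst, structConst, twist_actv_of_det_eq_one hA, twist_actv_of_det_eq_one hA,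
      hswap, detSign, if_pos hA, AddChar.map_add_eq_mul, AddChar.map_add_eq_mul]
    ring
  · rw [structConst, structConst, twist_actv_of_det_eq_neg_one hA,
      twist_actv_of_det_eq_neg_one hA, hswap, detSign, if_neg (by rw [hA]; decide),
      AddChar.map_add_eq_mul, AddChar.map_add_eq_mul]
    ring

noncomputable def gradeScale (A : Matrix (Fin 2) (Fin 2) (ZMod 3)) (u : ZMod 3 × ZMod 3) : ℂ :=
  detSign A * omChar (twistCorrection A u)

lemma gradeScale_ne_zero (A : Matrix (Fin 2) (Fin 2) (ZMod 3)) (u : ZMod 3 × ZMod 3) :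
    gradeScale A u ≠ 0 :=
  mul_ne_zero (left_ne_zero_of_mul_eq_one (detSign_mul_self A)) (omChar_ne_zero _)

lemma gradeScale_mul_structConst {A : Matrix (Fin 2) (Fin 2) (ZMod 3)}
    (hA : A.det = 1 ∨ A.det = -1) (u v : ZMod 3 × ZMod 3) :
    gradeScale A u * gradeScale A v * structConst (actv A u) (actv A v) =
      structConst u v * gradeScale A (u + v) := by
  have hchar : omChar (twistCorrection A u) * omChar (twistCorrection A v) *
      omChar (twistCorrection A (u + v) - twistCorrection A u - twistCorrection A v) =
        omChar (twistCorrection A (u + v)) := by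
    rw [← AddChar.map_add_eq_mul, ← AddChar.map_add_eq_mul]
    congr 1
    ring
  rw [structConst_actv hA, gradeScale, gradeScale, gradeScale]
  linear_combination (detSign A ^ 3 * structConst u v) * hchar +
    (detSign A * structConst u v * omChar (twistCorrection A (u + v))) *
      detSign_mul_self A

theorem LinearMap.map_bilin_eq_of_basis {ι R M : Type*} [CommSemiring R] [AddCommMonoid M]
    [Module R M] (b : Module.Basis ι R M) (g : M →ₗ[R] M)
    (B₁ B₂ : M →ₗ[R] M →ₗ[R] M)
    (h : ∀ i j, g (B₁ (b i) (b j)) = B₂ (g (b i)) (g (b j))) (x y : M) :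
    g (B₁ x y) = B₂ (g x) (g y) :=
  LinearMap.congr_fun₂
    (LinearMap.ext_basis b b (B := B₁.compr₂ g) (B' := B₂.compl₁₂ g g) h) x y

section GradedEquiv

variable (A : Matrix (Fin 2) (Fin 2) (ZMod 3)) (hA : IsUnit A.det)

noncomputable def nonzeroPerm :
    {u : ZMod 3 × ZMod 3 // u ≠ 0} ≃ {u : ZMod 3 × ZMod 3 // u ≠ 0} :=
  (actvEquiv A hA).toEquiv.subtypeEquiv fun _ => (AddEquiv.map_ne_zero_iff _).symm

@[simp]
lemma coe_nonzeroPerm (t : {u : ZMod 3 × ZMod 3 // u ≠ 0}) :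
    (nonzeroPerm A hA t : ZMod 3 × ZMod 3) = actv A t :=
  rfl

variable (μ : ZMod 3 × ZMod 3 → ℂ) (hμ : ∀ u, μ u ≠ 0)

noncomputable def gradedEquiv : sl3 ≃ₗ[ℂ] sl3 :=
  basisSl3.equiv ((basisSl3.reindex (nonzeroPerm A hA).symm).unitsSMul
    fun t => Units.mk0 (μ t) (hμ t)) (Equiv.refl _)

lemma gradedEquiv_basisSl3 (t : {u : ZMod 3 × ZMod 3 // u ≠ 0}) :
    gradedEquiv A hA μ hμ (basisSl3 t) = μ t • basisSl3 (nonzeroPerm A hA t) := by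
  simp [gradedEquiv, Module.Basis.equiv_apply, Module.Basis.unitsSMul_apply,
    Module.Basis.reindex_apply]

lemma coe_gradedEquiv_of_coe_eq_smul {y : sl3} {c : ℂ} {w : ZMod 3 × ZMod 3}
    (hy : (y : Matrix (Fin 3) (Fin 3) ℂ) = c • Xm3 w) :
    (gradedEquiv A hA μ hμ y : Matrix (Fin 3) (Fin 3) ℂ) = (c * μ w) • Xm3 (actv A w) := by
  by_cases hw : w = 0
  · -- `X_0` is the identity, which is not traceless
    have hc : c = 0 := by
      have htr : (y : Matrix (Fin 3) (Fin 3) ℂ).trace = 0 := y.2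
      simpa [hy, hw, trace_Xm3] using htr
    have hy0 : y = 0 := Subtype.ext (by simp [hy, hc])
    simp [hy0, hc]
  · have hy' : y = c • basisSl3 ⟨w, hw⟩ := Subtype.ext (by simp [hy])
    rw [hy', map_smul, gradedEquiv_basisSl3]
    simp [smul_smul]

end GradedEquiv

theorem stmt17_general (ε₁ ε₂ : (ZMod 3 × ZMod 3) × (ZMod 3 × ZMod 3) → ℂ)
    (a : ZMod 3 × ZMod 3 → ℂ) (ha : ∀ u, a u ≠ 0)
    (A : Matrix (Fin 2) (Fin 2) (ZMod 3)) (hA : A.det = 1 ∨ A.det = -1)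
    (hequiv : ∀ u v : ZMod 3 × ZMod 3,
      ε₁ (u, v) = a u * a v * (a (u + v))⁻¹ * ε₂ (actv A u, actv A v))
    (B₁ B₂ : ↥sl3 →ₗ[ℂ] ↥sl3 →ₗ[ℂ] ↥sl3)
    (hB₁ : ∀ u v : ZMod 3 × ZMod 3, u ≠ (0, 0) → v ≠ (0, 0) →
      ∀ xu xv : ↥sl3, (xu : Matrix (Fin 3) (Fin 3) ℂ) = Xm3 u →
        (xv : Matrix (Fin 3) (Fin 3) ℂ) = Xm3 v →
        (B₁ xu xv : Matrix (Fin 3) (Fin 3) ℂ) = ε₁ (u, v) • ⁅Xm3 u, Xm3 v⁆)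
    (hB₂ : ∀ u v : ZMod 3 × ZMod 3, u ≠ (0, 0) → v ≠ (0, 0) →
      ∀ xu xv : ↥sl3, (xu : Matrix (Fin 3) (Fin 3) ℂ) = Xm3 u →
        (xv : Matrix (Fin 3) (Fin 3) ℂ) = Xm3 v →
        (B₂ xu xv : Matrix (Fin 3) (Fin 3) ℂ) = ε₂ (u, v) • ⁅Xm3 u, Xm3 v⁆) :
    ∃ g : ↥sl3 ≃ₗ[ℂ] ↥sl3, ∀ x y : ↥sl3, g (B₁ x y) = B₂ (g x) (g y) := by
  have hdet : IsUnit A.det := by rcases hA with h | h <;> simp [h]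
  have hμ : ∀ u, a u * gradeScale A u ≠ 0 := fun u =>
    mul_ne_zero (ha u) (gradeScale_ne_zero A u)
  refine ⟨gradedEquiv A hdet _ hμ, LinearMap.map_bilin_eq_of_basis basisSl3 _ B₁ B₂ ?_⟩
  rintro ⟨u, hu⟩ ⟨v, hv⟩
  have h₁ := hB₁ u v hu hv _ _ (coe_basisSl3 ⟨u, hu⟩) (coe_basisSl3 ⟨v, hv⟩)
  have h₂ := hB₂ _ _ (nonzeroPerm A hdet ⟨u, hu⟩).2 (nonzeroPerm A hdet ⟨v, hv⟩).2 _ _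
    (coe_basisSl3 _) (coe_basisSl3 _)
  rw [lie_Xm3, smul_smul] at h₁ h₂
  rw [coe_nonzeroPerm, coe_nonzeroPerm] at h₂
  apply Subtype.ext
  simp only [LinearEquiv.coe_coe]
  rw [coe_gradedEquiv_of_coe_eq_smul A hdet _ hμ h₁, gradedEquiv_basisSl3, gradedEquiv_basisSl3,
    map_smul, LinearMap.map_smul₂, SetLike.val_smul, SetLike.val_smul, h₂, smul_smul, smul_smul,
    actv_add]
  congr 1
  rw [hequiv]
  linear_combination
    (-(a u * a v * ε₂ (actv A u, actv A v))) * gradeScale_mul_structConst hA u v +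
    (a u * a v * ε₂ (actv A u, actv A v) * structConst u v * gradeScale A (u + v)) *
      inv_mul_cancel₀ (ha (u + v))

/-- Graded contractions corresponding to equivalent solutions are isomorphic: if the
    symmetric functions ε₁ and ε₂ are equivalent via a nowhere-vanishing a and a matrix
    A ∈ H₃, and B₁, B₂ are the corresponding contracted bilinear products on sl(3,ℂ)
    (determined by B_t(X_u, X_v) = ε_t(u,v)·⁅X_u,X_v⁆ on the basis elements X_u, u ∈ I),
    then some linear automorphism g of sl(3,ℂ) satisfies g(B₁(x,y)) = B₂(g x, g y). -/
theorem stmt17 (ε₁ ε₂ : (ZMod 3 × ZMod 3) × (ZMod 3 × ZMod 3) → ℂ)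
    (hsym₁ : ∀ u v, ε₁ (u, v) = ε₁ (v, u)) (hsym₂ : ∀ u v, ε₂ (u, v) = ε₂ (v, u))
    (a : ZMod 3 × ZMod 3 → ℂ) (ha : ∀ u, a u ≠ 0)
    (A : Matrix (Fin 2) (Fin 2) (ZMod 3)) (hA : A.det = 1 ∨ A.det = -1)
    (hequiv : ∀ u v : ZMod 3 × ZMod 3,
      ε₁ (u, v) = a u * a v * (a (u + v))⁻¹ * ε₂ (actv A u, actv A v))
    (B₁ B₂ : ↥sl3 →ₗ[ℂ] ↥sl3 →ₗ[ℂ] ↥sl3)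
    (hB₁ : ∀ u v : ZMod 3 × ZMod 3, u ≠ (0, 0) → v ≠ (0, 0) →
      ∀ xu xv : ↥sl3, (xu : Matrix (Fin 3) (Fin 3) ℂ) = Xm3 u →
        (xv : Matrix (Fin 3) (Fin 3) ℂ) = Xm3 v →
        (B₁ xu xv : Matrix (Fin 3) (Fin 3) ℂ) = ε₁ (u, v) • ⁅Xm3 u, Xm3 v⁆)
    (hB₂ : ∀ u v : ZMod 3 × ZMod 3, u ≠ (0, 0) → v ≠ (0, 0) →
      ∀ xu xv : ↥sl3, (xu : Matrix (Fin 3) (Fin 3) ℂ) = Xm3 u →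
        (xv : Matrix (Fin 3) (Fin 3) ℂ) = Xm3 v →
        (B₂ xu xv : Matrix (Fin 3) (Fin 3) ℂ) = ε₂ (u, v) • ⁅Xm3 u, Xm3 v⁆) :
    ∃ g : ↥sl3 ≃ₗ[ℂ] ↥sl3, ∀ x y : ↥sl3, g (B₁ x y) = B₂ (g x) (g y) :=
  stmt17_general ε₁ ε₂ a ha A hA hequiv B₁ B₂ hB₁ hB₂
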